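/- With Y multiplication by x, Z the formal derivative on ℂ[x], H = Y∘Z, G = R(H)∘Z for a fixed polynomial R of degree d, q ∈ ℂ[X] with q(0) = 0 and deg q = l ≥ 1, and P_n^q = e^{q(G)}(x^n): the operator G is a lowering operator, G(P_n^q) = n·R(n−1)·P_{n−1}^q for all n ≥ 1 and G(P_0^q) = 0; the operator M = e^{q(G)}∘Y∘e^{−q(G)} is a raising operator, M(P_n^q) = P_{n+1}^q for all n ∈ ℕ; and the Rodrigues-type formula P_n^q = M^n(1) holds. -/
import Mathlib


open Polynomial Finset

noncomputable section

/-- `E` is the ℂ-algebra of ℂ-linear endomorphisms of `ℂ[x]`. -/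
abbrev E := Module.End ℂ (Polynomial ℂ)

/-- `Y`: multiplication by `x`. -/
def Yop : E := LinearMap.mulLeft ℂ (X : Polynomial ℂ)

/-- `Z`: the formal derivative. -/
def Zop : E := Polynomial.derivative

/-- `H = Y ∘ Z`. -/
def Hop : E := Yop * Zop

/-- `G = R(H) ∘ Z`. -/
def Gop (R : Polynomial ℂ) : E := aeval Hop R * Zop

/-- `e^A p = Σ_{j≥0} A^j p / j!` for a degree-lowering operator `A`;
the series is the finite sum over `j ≤ deg p`. -/
def expOp (A : E) (p : Polynomial ℂ) : Polynomial ℂ :=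
  ∑ j ∈ range (p.natDegree + 1), (j.factorial : ℂ)⁻¹ • (A ^ j) p

/-- `P_n^q = e^{q(G)}(x^n)`. -/
def Pq (R q : Polynomial ℂ) (n : ℕ) : Polynomial ℂ :=
  expOp (aeval (Gop R) q) (X ^ n : Polynomial ℂ)

/-- The raising operator `M = e^{q(G)} ∘ Y ∘ e^{−q(G)}`. -/
def Mop (R q : Polynomial ℂ) : Polynomial ℂ → Polynomial ℂ :=
  fun p => expOp (aeval (Gop R) q) (X * expOp (-(aeval (Gop R) q)) p)

namespace PqAux

/-- degree-nonincreasing operators -/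
def Lowish (B : E) : Prop := ∀ p : Polynomial ℂ, (B p).degree ≤ p.degree

/-- strictly degree-decreasing operators -/
def StrictLow (A : E) : Prop := ∀ p : Polynomial ℂ, p ≠ 0 → (A p).degree < p.degree

lemma StrictLow.lowish {A : E} (h : StrictLow A) : Lowish A := by
  intro p
  by_cases hp : p = 0
  · simp [hp]
  · exact (h p hp).le

lemma Lowish.natDegree_le {B : E} (h : Lowish B) (p : Polynomial ℂ) :
    (B p).natDegree ≤ p.natDegree := natDegree_le_natDegree (h p)

lemma Lowish.pow {B : E} (h : Lowish B) (m : ℕ) : Lowish (B ^ m) := by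
  induction m with
  | zero => intro p; simp
  | succ m ih =>
      intro p
      rw [pow_succ]
      exact le_trans (ih (B p)) (h p)

lemma lowish_aeval {B : E} (h : Lowish B) (s : Polynomial ℂ) : Lowish (aeval B s) := by
  induction s using Polynomial.induction_on' with
  | add f g hf hg =>
      intro p
      rw [map_add]
      exact le_trans (degree_add_le _ _) (max_le (hf p) (hg p))
  | monomial n c =>
      intro p
      rw [aeval_monomial, ← Algebra.smul_def]
      exact le_trans (degree_smul_le _ _) (h.pow n p)

lemma lowish_H : Lowish Hop := by
  intro p
  have happ : Hop p = X * derivative p := rfl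
  by_cases hd : derivative p = 0
  · simp [happ, hd]
  · have hp : p ≠ 0 := fun h0 => hd (by simp [h0])
    rw [happ, degree_mul, degree_X]
    have h1 : (derivative p).degree < p.degree := degree_derivative_lt hp
    rw [degree_eq_natDegree hd, degree_eq_natDegree hp] at h1 ⊢
    have h2 : (derivative p).natDegree < p.natDegree := by exact_mod_cast h1
    exact_mod_cast (show 1 + (derivative p).natDegree ≤ p.natDegree by omega)

lemma strictLow_G (R : Polynomial ℂ) : StrictLow (Gop R) := by
  intro p hp
  have happ : Gop R p = aeval Hop R (derivative p) := rfl
  rw [happ]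
  exact lt_of_le_of_lt (lowish_aeval lowish_H R _) (degree_derivative_lt hp)

lemma strictLow_A (R q : Polynomial ℂ) (hq0 : q.eval 0 = 0) :
    StrictLow (aeval (Gop R) q) := by
  obtain ⟨q', hq'⟩ : (X : Polynomial ℂ) ∣ q := by
    rw [X_dvd_iff, coeff_zero_eq_eval_zero]; exact hq0
  intro p hp
  have hc : (Gop R) * aeval (Gop R) q' = aeval (Gop R) q' * (Gop R) :=
    calc (Gop R) * aeval (Gop R) q' = aeval (Gop R) (X * q') := by rw [map_mul, aeval_X]
      _ = aeval (Gop R) (q' * X) := by rw [mul_comm]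
      _ = aeval (Gop R) q' * (Gop R) := by rw [map_mul, aeval_X]
  have : aeval (Gop R) q p = (aeval (Gop R) q') (Gop R p) := by
    rw [hq', map_mul, aeval_X, hc, Module.End.mul_apply]
  rw [this]
  by_cases hr : Gop R p = 0
  · rw [hr, map_zero, degree_zero]
    exact Ne.bot_lt (fun hb => hp (degree_eq_bot.mp hb))
  · exact lt_of_le_of_lt (lowish_aeval (strictLow_G R).lowish q' _) (strictLow_G R p hp)

lemma StrictLow.neg {A : E} (h : StrictLow A) : StrictLow (-A) := by
  intro p hp
  have : (-A) p = -(A p) := rfl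
  rw [this, degree_neg]
  exact h p hp

lemma StrictLow.pow_apply_eq_zero {A : E} (h : StrictLow A) :
    ∀ (n : ℕ) (p : Polynomial ℂ), p.degree < (n : ℕ) → (A ^ n) p = 0 := by
  intro n
  induction n with
  | zero =>
      intro p hp
      have : p = 0 := degree_eq_bot.mp (by
        by_contra hb
        exact absurd hp (by simp [Nat.cast_zero, ← degree_eq_bot] at hb ⊢; exact hb))
      simp [this]
  | succ n ih =>
      intro p hp
      by_cases h0 : p = 0
      · simp [h0]
      · rw [pow_succ, Module.End.mul_apply]
        apply ih
        have hle : p.degree ≤ (n : ℕ) := by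
          have h5 : p.natDegree < n + 1 := by
            rw [natDegree_lt_iff_degree_lt h0]
            exact_mod_cast hp
          exact degree_le_of_natDegree_le (by omega)
        exact lt_of_lt_of_le (h p h0) hle

lemma StrictLow.pow_apply_eq_zero' {A : E} (h : StrictLow A) {j : ℕ} {p : Polynomial ℂ}
    (hj : p.natDegree < j) : (A ^ j) p = 0 :=
  h.pow_apply_eq_zero j p (lt_of_le_of_lt degree_le_natDegree (by exact_mod_cast hj))

lemma expOp_expand {A : E} (h : StrictLow A) (p : Polynomial ℂ) (N : ℕ) (hN : p.natDegree ≤ N) :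
    expOp A p = ∑ j ∈ range (N + 1), (j.factorial : ℂ)⁻¹ • (A ^ j) p := by
  unfold expOp
  apply Finset.sum_subset
  · exact range_subset_range.mpr (by omega)
  · intro j hj hj'
    rw [mem_range] at hj hj'
    rw [h.pow_apply_eq_zero' (by omega), smul_zero]

/-- truncated exponential series -/
def sN (N : ℕ) : Polynomial ℂ := ∑ j ∈ range (N + 1), C ((j.factorial : ℂ)⁻¹) * X ^ j

/-- truncated exponential series with negated argument -/
def uN (N : ℕ) : Polynomial ℂ :=
  ∑ j ∈ range (N + 1), C ((-1 : ℂ) ^ j * (j.factorial : ℂ)⁻¹) * X ^ j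

lemma aeval_apply (A : E) (c : ℂ) (j : ℕ) (p : Polynomial ℂ) :
    (aeval A (C c * X ^ j)) p = c • (A ^ j) p := by
  rw [map_mul, aeval_C, aeval_X_pow, ← Algebra.smul_def, LinearMap.smul_apply]

lemma aeval_sN_apply (A : E) (N : ℕ) (p : Polynomial ℂ) :
    (aeval A (sN N)) p = ∑ j ∈ range (N + 1), (j.factorial : ℂ)⁻¹ • (A ^ j) p := by
  rw [sN, map_sum, LinearMap.sum_apply]
  exact Finset.sum_congr rfl fun j _ => aeval_apply A _ j p

lemma aeval_uN_apply (A : E) (N : ℕ) (p : Polynomial ℂ) :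
    (aeval A (uN N)) p = ∑ j ∈ range (N + 1), (j.factorial : ℂ)⁻¹ • ((-A) ^ j) p := by
  rw [uN, map_sum, LinearMap.sum_apply]
  refine Finset.sum_congr rfl fun j _ => ?_
  rw [aeval_apply A _ j p]
  have : (-A) ^ j = ((-1 : ℂ) ^ j) • (A ^ j) := by
    rw [← neg_one_smul ℂ A, _root_.smul_pow]
  rw [this, LinearMap.smul_apply, smul_smul, mul_comm]

lemma coeff_sN (N k : ℕ) : (sN N).coeff k = if k ≤ N then (k.factorial : ℂ)⁻¹ else 0 := by
  rw [sN, finset_sum_coeff]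
  simp only [coeff_C_mul, coeff_X_pow, mul_ite, mul_one, mul_zero]
  rw [Finset.sum_ite_eq (range (N + 1)) k fun j => (j.factorial : ℂ)⁻¹]
  simp [Nat.lt_succ_iff]

lemma coeff_uN (N k : ℕ) :
    (uN N).coeff k = if k ≤ N then (-1 : ℂ) ^ k * (k.factorial : ℂ)⁻¹ else 0 := by
  rw [uN, finset_sum_coeff]
  simp only [coeff_C_mul, coeff_X_pow, mul_ite, mul_one, mul_zero]
  rw [Finset.sum_ite_eq (range (N + 1)) k fun j => (-1 : ℂ) ^ j * (j.factorial : ℂ)⁻¹]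
  simp [Nat.lt_succ_iff]

lemma natDegree_sN (N : ℕ) : (sN N).natDegree ≤ N := by
  apply natDegree_sum_le_of_forall_le
  intro j hj
  rw [mem_range, Nat.lt_succ_iff] at hj
  exact le_trans (natDegree_C_mul_le _ _) (by simp [hj])

lemma coeff_w (N k : ℕ) (hk : k ≤ N) :
    (uN N * sN N).coeff k = if k = 0 then 1 else 0 := by
  rw [coeff_mul, Finset.Nat.sum_antidiagonal_eq_sum_range_succ_mk]
  have hterm : ∀ i ∈ range (k + 1),
      (uN N).coeff i * (sN N).coeff (k - i)
        = (-1 : ℂ) ^ i * (k.choose i : ℂ) * ((k.factorial : ℂ))⁻¹ := by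
    intro i hi
    rw [mem_range, Nat.lt_succ_iff] at hi
    rw [coeff_uN, coeff_sN, if_pos (le_trans hi hk), if_pos (le_trans (Nat.sub_le k i) hk)]
    rw [Nat.cast_choose ℂ hi]
    have h2 : (i.factorial : ℂ) ≠ 0 := Nat.cast_ne_zero.mpr i.factorial_ne_zero
    have h3 : ((k - i).factorial : ℂ) ≠ 0 := Nat.cast_ne_zero.mpr (k - i).factorial_ne_zero
    have h4 : (k.factorial : ℂ) ≠ 0 := Nat.cast_ne_zero.mpr k.factorial_ne_zero
    field_simp
  rw [Finset.sum_congr rfl hterm, ← Finset.sum_mul]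
  have hz : (∑ i ∈ range (k + 1), (-1 : ℂ) ^ i * (k.choose i : ℂ))
      = if k = 0 then 1 else 0 := by
    have h := Int.alternating_sum_range_choose (n := k)
    exact_mod_cast congrArg (fun z : ℤ => (z : ℂ)) h
  rw [hz]
  by_cases h0 : k = 0 <;> simp [h0]

lemma exp_inverse {A : E} (h : StrictLow A) (p : Polynomial ℂ) :
    expOp (-A) (expOp A p) = p := by
  set N := p.natDegree with hN
  have h1 : expOp A p = (aeval A (sN N)) p := by
    rw [expOp_expand h p N le_rfl, aeval_sN_apply]
  have h2 : ((aeval A (sN N)) p).natDegree ≤ N :=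
    (lowish_aeval h.lowish (sN N)).natDegree_le p
  rw [h1, expOp_expand h.neg _ N h2, ← aeval_uN_apply]
  have h3 : (aeval A (uN N)) ((aeval A (sN N)) p) = (aeval A (uN N * sN N)) p := by
    rw [map_mul, Module.End.mul_apply]
  rw [h3]
  have h4 : (uN N * sN N).natDegree < 2 * N + 2 := by
    have := natDegree_mul_le (p := uN N) (q := sN N)
    have h5 : (uN N).natDegree ≤ N := by
      apply natDegree_sum_le_of_forall_le
      intro j hj
      rw [mem_range, Nat.lt_succ_iff] at hj
      exact le_trans (natDegree_C_mul_le _ _) (by simp [hj])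
    have h6 := natDegree_sN N
    omega
  rw [aeval_eq_sum_range' h4, LinearMap.sum_apply]
  rw [Finset.sum_eq_single 0]
  · rw [coeff_w N 0 (Nat.zero_le N), if_pos rfl, LinearMap.smul_apply, pow_zero,
      Module.End.one_apply, one_smul]
  · intro i _ hi0
    by_cases hiN : i ≤ N
    · rw [coeff_w N i hiN, if_neg hi0, zero_smul, LinearMap.zero_apply]
    · rw [LinearMap.smul_apply, h.pow_apply_eq_zero' (by omega), smul_zero]
  · intro h0
    exact absurd (mem_range.mpr (by omega)) h0

lemma comm_exp {A B : E} (hA : StrictLow A) (hB : Lowish B) (hc : Commute B A)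
    (p : Polynomial ℂ) : B (expOp A p) = expOp A (B p) := by
  rw [expOp_expand hA (B p) p.natDegree (hB.natDegree_le p)]
  unfold expOp
  rw [map_sum]
  refine Finset.sum_congr rfl fun j _ => ?_
  rw [LinearMap.map_smul]
  congr 1
  calc B ((A ^ j) p) = (B * A ^ j) p := rfl
    _ = (A ^ j * B) p := by rw [(hc.pow_right j).eq]
    _ = (A ^ j) (B p) := rfl

lemma expOp_smul {A : E} (hA : StrictLow A) (c : ℂ) (p : Polynomial ℂ) :
    expOp A (c • p) = c • expOp A p := by
  by_cases hc : c = 0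
  · subst hc
    rw [zero_smul, zero_smul]
    unfold expOp
    simp
  · have hdeg : (c • p).natDegree = p.natDegree := by
      by_cases hp : p = 0
      · simp [hp]
      · rw [smul_eq_C_mul]; exact natDegree_C_mul hc
    unfold expOp
    rw [hdeg, Finset.smul_sum]
    refine Finset.sum_congr rfl fun j _ => ?_
    rw [LinearMap.map_smul, smul_comm]

lemma commute_G_aeval (R s : Polynomial ℂ) : Commute (Gop R) (aeval (Gop R) s) := by
  have h := (Commute.all (X : Polynomial ℂ) s).map (aeval (Gop R))
  rwa [aeval_X] at h

lemma Hop_X_pow (m : ℕ) : Hop (X ^ m : Polynomial ℂ) = (m : ℂ) • (X ^ m : Polynomial ℂ) := by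
  have happ : Hop (X ^ m : Polynomial ℂ) = X * derivative (X ^ m : Polynomial ℂ) := rfl
  cases m with
  | zero =>
      simp [show Hop (1 : Polynomial ℂ) = X * derivative (1 : Polynomial ℂ) from rfl]
  | succ m =>
      rw [happ, derivative_X_pow, smul_eq_C_mul]
      push_cast
      ring

lemma aeval_Hop_X_pow (s : Polynomial ℂ) (m : ℕ) :
    aeval Hop s (X ^ m : Polynomial ℂ) = s.eval (m : ℂ) • (X ^ m : Polynomial ℂ) := by
  induction s using Polynomial.induction_on' with
  | add f g hf hg =>
      rw [map_add, LinearMap.add_apply, hf, hg, eval_add, add_smul]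
  | monomial n c =>
      rw [aeval_monomial, ← Algebra.smul_def, LinearMap.smul_apply, eval_monomial]
      have hpow : ∀ k : ℕ, (Hop ^ k) (X ^ m : Polynomial ℂ)
          = ((m : ℂ) ^ k) • (X ^ m : Polynomial ℂ) := by
        intro k
        induction k with
        | zero => simp
        | succ k ih =>
            rw [pow_succ', Module.End.mul_apply, ih, LinearMap.map_smul, Hop_X_pow,
              smul_smul, pow_succ]
      rw [hpow n, smul_smul]

lemma G_X_pow (R : Polynomial ℂ) (n : ℕ) (hn : 1 ≤ n) :
    Gop R (X ^ n : Polynomial ℂ)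
      = ((n : ℂ) * R.eval ((n : ℂ) - 1)) • (X ^ (n - 1) : Polynomial ℂ) := by
  have happ : Gop R (X ^ n : Polynomial ℂ) = aeval Hop R (derivative (X ^ n : Polynomial ℂ)) :=
    rfl
  rw [happ, derivative_X_pow, ← smul_eq_C_mul, LinearMap.map_smul, aeval_Hop_X_pow,
    smul_smul]
  congr 2
  rw [Nat.cast_sub hn, Nat.cast_one]

lemma G_one (R : Polynomial ℂ) : Gop R (1 : Polynomial ℂ) = 0 := by
  have happ : Gop R (1 : Polynomial ℂ) = aeval Hop R (derivative (1 : Polynomial ℂ)) := rfl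
  rw [happ, derivative_one, map_zero]

lemma expOp_one (A : E) : expOp A (1 : Polynomial ℂ) = 1 := by
  unfold expOp
  simp

end PqAux

/-- Ladder operators and the Rodrigues-type formula for the `P_n^q`. -/
theorem Pq_ladder (R : Polynomial ℂ) (d : ℕ) (hR : R.natDegree = d)
    (q : Polynomial ℂ) (hq0 : q.eval 0 = 0) (l : ℕ) (hl : 1 ≤ l)
    (hql : q.natDegree = l) :
    (∀ n : ℕ, 1 ≤ n →
      Gop R (Pq R q n) = ((n : ℂ) * R.eval ((n : ℂ) - 1)) • Pq R q (n - 1)) ∧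
    Gop R (Pq R q 0) = 0 ∧
    (∀ n : ℕ, Mop R q (Pq R q n) = Pq R q (n + 1)) ∧
    (∀ n : ℕ, (Mop R q)^[n] (1 : Polynomial ℂ) = Pq R q n) := by
  have hSA : PqAux.StrictLow (aeval (Gop R) q) := PqAux.strictLow_A R q hq0
  have hP0 : Pq R q 0 = 1 := by rw [Pq, pow_zero, PqAux.expOp_one]
  have hG : ∀ n : ℕ, 1 ≤ n →
      Gop R (Pq R q n) = ((n : ℂ) * R.eval ((n : ℂ) - 1)) • Pq R q (n - 1) := by
    intro n hn
    rw [Pq, PqAux.comm_exp hSA (PqAux.strictLow_G R).lowish (PqAux.commute_G_aeval R q),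
      PqAux.G_X_pow R n hn, PqAux.expOp_smul hSA, ← Pq]
  have hM : ∀ n : ℕ, Mop R q (Pq R q n) = Pq R q (n + 1) := by
    intro n
    rw [Mop, Pq, PqAux.exp_inverse hSA, ← pow_succ', ← Pq]
  refine ⟨hG, by rw [hP0]; exact PqAux.G_one R, hM, ?_⟩
  intro n
  induction n with
  | zero => rw [Function.iterate_zero_apply, hP0]
  | succ n ih => rw [Function.iterate_succ_apply', ih, hM]

end
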